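/- Let ℘ be a prime of degree h ≥ 1 in A. For all ᾱ, β̄ ∈ S_h^ω and all u ∈ ℤ_{≥0}, one has binom(z_{ᾱ⋆β̄}(h), u)_C ≡ binom(z_ᾱ(h), u_{(deg(ᾱ)−1, 0)})_C · binom(z_β̄(h), u_{(deg(ᾱ))})_C (mod ℘). -/

import Mathlib

/-!
Write `[k] = T^{q^k} - T`. Frobenius gives `D_{i+1} = [i+1] D_i^q`, whence the analogue of
Legendre's formula `n!_C = ∏_{k ≥ 1} [k]^{⌊n / q^k⌋}` and of Kummer's theorem: `binom(n, m)_C` is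
the product of the `[k + 1]` over the positions `k` at which adding `m` and `n - m` in base `q`
carries. Modulo a prime `℘` of degree `h`, `[k]` only depends on `k mod h` and vanishes for `h ∣ k`.
Cut `n = A + q^{hL} B` and `u = v + q^{hL} w` at position `hL`. If `v ≤ A`, the carries below `hL`
are those of `binom(A, v)_C` and the ones above are those of `binom(B, w)_C`, shifted by `hL`;
if `v > A`, there is a carry into position `hL`, contributing the factor `[hL] ≡ 0`.
-/

open Polynomial

/-- `D_i = ∏_{r=0}^{i-1} (T^{q^i} - T^{q^r})`, with `D_0 = 1`. -/
noncomputable def carlitzD (Fq : Type*) [Field Fq] (q i : ℕ) : Polynomial Fq :=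
  ∏ r ∈ Finset.range i, (X ^ q ^ i - X ^ q ^ r)

/-- The Carlitz factorial `n!_C = ∏_i D_i^{n_i}`, where `n = Σ n_i q^i` is the
`q`-adic expansion of `n` (the digit `n_i` is `n / q^i % q`). -/
noncomputable def carlitzFactorial (Fq : Type*) [Field Fq] (q n : ℕ) : Polynomial Fq :=
  ∏ i ∈ Finset.range (n + 1), carlitzD Fq q i ^ (n / q ^ i % q)

/-- The Carlitz binomial coefficient `binom(n,m)_C = n!_C / (m!_C (n-m)!_C)` for `m ≤ n`,
and `0` otherwise. -/
noncomputable def carlitzBinom (Fq : Type*) [Field Fq] (q n m : ℕ) : Polynomial Fq :=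
  if m ≤ n then
    carlitzFactorial Fq q n / (carlitzFactorial Fq q m * carlitzFactorial Fq q (n - m))
  else 0

/-- `u_{(r,s)} = Σ_{i=0}^{r} u_{s+i} Q^i`, where `u_j = u / Q^j % Q` is the `j`-th digit of
`u` in base `Q` (here `Q = q^h`). -/
def digitTrunc (Q u r s : ℕ) : ℕ :=
  ∑ i ∈ Finset.range (r + 1), u / Q ^ (s + i) % Q * Q ^ i

/-- `u_{(s)} = Σ_{i≥0} u_{s+i} Q^i`, where `u_j = u / Q^j % Q` is the `j`-th digit of `u`
in base `Q`. -/
def digitShift (Q u s : ℕ) : ℕ :=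
  ∑ i ∈ Finset.range (u + 1), u / Q ^ (s + i) % Q * Q ^ i

open Finset

/-- For `Q = q ^ (k + 1)`, the carry out of the `k`-th `q`-adic digit in `m + (n - m)`. -/
def carry (Q n m : ℕ) : ℕ := n / Q - m / Q - (n - m) / Q

lemma div_add_div_add_carry {Q n m : ℕ} (hmn : m ≤ n) :
    m / Q + (n - m) / Q + carry Q n m = n / Q := by
  have := Nat.div_add_div_le_add_div (x := m) (y := n - m) (z := Q)
  rw [Nat.add_sub_cancel' hmn] at this
  unfold carry
  omega

lemma carry_add_mul_of_dvd {Q T A B v w : ℕ} (hQT : Q ∣ T) (hvA : v ≤ A) (hwB : w ≤ B) :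
    carry Q (A + T * B) (v + T * w) = carry Q A v := by
  obtain ⟨t, rfl⟩ := hQT
  rcases Nat.eq_zero_or_pos Q with rfl | hQ
  · simp [carry]
  have hsub : A + Q * t * B - (v + Q * t * w) = A - v + Q * (t * (B - w)) := by
    rw [Nat.mul_sub, Nat.mul_sub, ← mul_assoc, ← mul_assoc]
    have := Nat.mul_le_mul_left (Q * t) hwB
    omega
  have hdiv (x y : ℕ) : (x + Q * t * y) / Q = x / Q + t * y := by
    rw [mul_assoc, Nat.add_mul_div_left _ _ hQ]
  unfold carry
  rw [hsub, hdiv, hdiv, Nat.add_mul_div_left _ _ hQ, Nat.mul_sub]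
  have := Nat.mul_le_mul_left t hwB
  omega

lemma carry_mul_add_mul {T M A B v w : ℕ} (hAT : A < T) (hvA : v ≤ A) (hwB : w ≤ B) :
    carry (T * M) (A + T * B) (v + T * w) = carry M B w := by
  have hdiv {x : ℕ} (y : ℕ) (hx : x < T) : (x + T * y) / (T * M) = y / M := by
    rw [← Nat.div_div_eq_div_mul, Nat.add_mul_div_left _ _ (by omega), Nat.div_eq_of_lt hx,
      zero_add]
  have hsub : A + T * B - (v + T * w) = A - v + T * (B - w) := by
    rw [Nat.mul_sub]
    have := Nat.mul_le_mul_left T hwB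
    omega
  unfold carry
  rw [hsub, hdiv _ hAT, hdiv _ (by omega), hdiv _ (by omega)]

lemma carry_add_mul_eq_one {T A B v w : ℕ} (hAv : A < v) (hvT : v < T)
    (hle : v + T * w ≤ A + T * B) :
    carry T (A + T * B) (v + T * w) = 1 := by
  have hT : 0 < T := by omega
  obtain ⟨c, rfl⟩ : ∃ c, B = w + 1 + c := by
    refine ⟨B - (w + 1), ?_⟩
    by_contra hB
    have := Nat.mul_le_mul_left T (show B ≤ w by omega)
    omega
  have hsub : A + T * (w + 1 + c) - (v + T * w) = (T + A - v) + T * c := by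
    rw [mul_add, mul_add, mul_one]
    omega
  unfold carry
  rw [hsub, Nat.add_mul_div_left _ _ hT, Nat.add_mul_div_left _ _ hT,
    Nat.add_mul_div_left _ _ hT, Nat.div_eq_of_lt (hAv.trans hvT), Nat.div_eq_of_lt hvT,
    Nat.div_eq_of_lt (by omega)]
  omega

lemma sum_range_div_pow_mod_mul_pow (Q v k : ℕ) :
    ∑ i ∈ range k, v / Q ^ i % Q * Q ^ i = v % Q ^ k := by
  induction k with
  | zero => simp [Nat.mod_one]
  | succ k ih => rw [sum_range_succ, ih, Nat.mod_pow_succ, mul_comm (Q ^ k)]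

lemma digitTrunc_zero (Q u r : ℕ) : digitTrunc Q u r 0 = u % Q ^ (r + 1) := by
  simp only [digitTrunc, zero_add]
  exact sum_range_div_pow_mod_mul_pow Q u (r + 1)

lemma digitShift_eq_div {Q : ℕ} (hQ : 1 < Q) (u s : ℕ) : digitShift Q u s = u / Q ^ s := by
  simp only [digitShift, pow_add, ← Nat.div_div_eq_div_mul]
  rw [sum_range_div_pow_mod_mul_pow, Nat.mod_eq_of_lt]
  exact (Nat.div_le_self u _).trans_lt
    ((Nat.lt_pow_self hQ).trans (Nat.pow_lt_pow_right hQ (Nat.lt_succ_self u)))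

noncomputable def carlitzBracket (Fq : Type*) [Field Fq] (q k : ℕ) : Polynomial Fq :=
  X ^ q ^ k - X

section Carlitz

variable {Fq : Type*} [Field Fq]

lemma carlitzFactorial_eq_prod_range {q n N : ℕ} (hq : 1 < q) (hn : n < q ^ N) :
    carlitzFactorial Fq q n = ∏ i ∈ range N, carlitzD Fq q i ^ (n / q ^ i % q) := by
  have hone {i : ℕ} (hi : N ≤ i ∨ n < i) : carlitzD Fq q i ^ (n / q ^ i % q) = 1 := by
    have : n < q ^ i := hi.elim (fun hi ↦ hn.trans_le (Nat.pow_le_pow_right (by omega) hi))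
      (fun hi ↦ hi.trans (Nat.lt_pow_self hq))
    rw [Nat.div_eq_of_lt this, Nat.zero_mod, pow_zero]
  calc carlitzFactorial Fq q n
      = ∏ i ∈ range (n + 1 + N), carlitzD Fq q i ^ (n / q ^ i % q) :=
        prod_subset (range_subset_range.2 (by omega)) fun i hi hni ↦
          hone (by simp at hi hni; omega)
    _ = _ := (prod_subset (range_subset_range.2 (by omega)) fun i hi hni ↦
        hone (by simp at hi hni; omega)).symm

lemma carlitzBinom_of_lt {q n m : ℕ} (h : n < m) : carlitzBinom Fq q n m = 0 :=
  if_neg (by omega)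

variable [Fintype Fq]

local notation "q" => Fintype.card Fq

lemma carlitzBracket_ne_zero {k : ℕ} (hk : k ≠ 0) : carlitzBracket Fq q k ≠ 0 :=
  FiniteField.X_pow_card_pow_sub_X_ne_zero Fq hk Fintype.one_lt_card

lemma carlitzD_succ (i : ℕ) :
    carlitzD Fq q (i + 1) = carlitzBracket Fq q (i + 1) * carlitzD Fq q i ^ q := by
  have hfrob (r : ℕ) :
      (X ^ q ^ i - X ^ q ^ r : Fq[X]) ^ q = X ^ q ^ (i + 1) - X ^ q ^ (r + 1) := by
    rw [← FiniteField.expand_card]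
    simp [← pow_mul, pow_succ']
  simp only [carlitzD, carlitzBracket, prod_range_succ' _ i, ← prod_pow, hfrob, pow_zero, pow_one]
  ring

/-- The Carlitz analogue of Legendre's formula `v_p(n!) = ∑ ⌊n / p^k⌋`. -/
lemma carlitzFactorial_eq_prod_carlitzBracket {n N : ℕ} (hn : n < q ^ N) :
    carlitzFactorial Fq q n =
      ∏ k ∈ range N, carlitzBracket Fq q (k + 1) ^ (n / q ^ (k + 1)) := by
  have hq : 1 < q := Fintype.one_lt_card
  induction N generalizing n with
  | zero => simp [Nat.lt_one_iff.1 (pow_zero q ▸ hn), carlitzFactorial]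
  | succ N ih =>
    have hdiv (k : ℕ) : n / q ^ (k + 1) = n / q / q ^ k := by
      rw [Nat.div_div_eq_div_mul, pow_succ']
    have hn' : n / q < q ^ N := Nat.div_lt_of_lt_mul (by rwa [← pow_succ'])
    calc carlitzFactorial Fq q n
        = ∏ i ∈ range N, carlitzD Fq q (i + 1) ^ (n / q / q ^ i % q) := by
          rw [carlitzFactorial_eq_prod_range hq hn, prod_range_succ']
          simp [carlitzD, hdiv]
      _ = (∏ k ∈ range N, carlitzBracket Fq q (k + 1) ^ (n / q / q ^ k % q)) *
            carlitzFactorial Fq q (n / q) ^ q := by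
          simp only [carlitzD_succ, mul_pow, prod_mul_distrib, ← pow_mul,
            carlitzFactorial_eq_prod_range hq hn', ← prod_pow, mul_comm q]
      _ = ∏ k ∈ range N, carlitzBracket Fq q (k + 1) ^ (n / q / q ^ k) := by
          rw [ih hn', ← prod_pow, ← prod_mul_distrib]
          refine prod_congr rfl fun k _ ↦ ?_
          rw [← pow_mul, ← pow_add, pow_succ, ← Nat.div_div_eq_div_mul, Nat.mod_add_div']
      _ = _ := by
          rw [prod_range_succ, Nat.div_eq_of_lt hn, pow_zero, mul_one]
          simp only [hdiv]

lemma carlitzFactorial_ne_zero (n : ℕ) : carlitzFactorial Fq q n ≠ 0 := by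
  rw [carlitzFactorial_eq_prod_carlitzBracket (Nat.lt_pow_self Fintype.one_lt_card)]
  exact prod_ne_zero_iff.2 fun k _ ↦ pow_ne_zero _ (carlitzBracket_ne_zero k.succ_ne_zero)

lemma carlitzBinom_eq_prod_carlitzBracket {n m N : ℕ} (hmn : m ≤ n) (hn : n < q ^ N) :
    carlitzBinom Fq q n m =
      ∏ k ∈ range N, carlitzBracket Fq q (k + 1) ^ carry (q ^ (k + 1)) n m := by
  have hfac : carlitzFactorial Fq q n = carlitzFactorial Fq q m * carlitzFactorial Fq q (n - m) *
      ∏ k ∈ range N, carlitzBracket Fq q (k + 1) ^ carry (q ^ (k + 1)) n m := by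
    simp only [carlitzFactorial_eq_prod_carlitzBracket hn,
      carlitzFactorial_eq_prod_carlitzBracket (hmn.trans_lt hn),
      carlitzFactorial_eq_prod_carlitzBracket ((Nat.sub_le n m).trans_lt hn),
      ← prod_mul_distrib, ← pow_add, div_add_div_add_carry hmn]
  rw [carlitzBinom, if_pos hmn, hfac, mul_div_cancel_left₀ _
    (mul_ne_zero (carlitzFactorial_ne_zero m) (carlitzFactorial_ne_zero (n - m)))]

variable {℘ : Fq[X]}

lemma Irreducible.dvd_carlitzBracket (hirr : Irreducible ℘) {k : ℕ} (hk : ℘.natDegree ∣ k) :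
    ℘ ∣ carlitzBracket Fq q k := by
  rw [carlitzBracket, ← Nat.card_eq_fintype_card]
  exact hirr.natDegree_dvd_iff_dvd_X_pow_card_pow_sub_X.1 hk

lemma Irreducible.mk_carlitzBracket_add (hirr : Irreducible ℘) {k : ℕ} (hk : ℘.natDegree ∣ k)
    (j : ℕ) :
    AdjoinRoot.mk ℘ (carlitzBracket Fq q (k + j)) =
      AdjoinRoot.mk ℘ (carlitzBracket Fq q j) := by
  rw [AdjoinRoot.mk_eq_mk, carlitzBracket, carlitzBracket, sub_sub_sub_cancel_right, pow_add,
    pow_mul]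
  exact (hirr.dvd_carlitzBracket hk).trans (sub_dvd_pow_sub_pow _ _ _)

variable {d A B v w : ℕ}

lemma Irreducible.mk_carlitzBinom_add_mul_of_le (hirr : Irreducible ℘) (hd : ℘.natDegree ∣ d)
    (hA : A < q ^ d) (hvA : v ≤ A) (hwB : w ≤ B) :
    AdjoinRoot.mk ℘ (carlitzBinom Fq q (A + q ^ d * B) (v + q ^ d * w)) =
      AdjoinRoot.mk ℘ (carlitzBinom Fq q A v) * AdjoinRoot.mk ℘ (carlitzBinom Fq q B w) := by
  have hq : 1 < q := Fintype.one_lt_card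
  have hn : A + q ^ d * B < q ^ (d + B) := by
    rw [pow_add]
    nlinarith [Nat.lt_pow_self (n := B) hq]
  have hle : v + q ^ d * w ≤ A + q ^ d * B := by
    have := Nat.mul_le_mul_left (q ^ d) hwB
    omega
  rw [carlitzBinom_eq_prod_carlitzBracket hle hn, prod_range_add,
    carlitzBinom_eq_prod_carlitzBracket hvA hA,
    carlitzBinom_eq_prod_carlitzBracket hwB (Nat.lt_pow_self hq), map_mul]
  congr 1
  · refine congrArg _ (prod_congr rfl fun k hk ↦ ?_)
    rw [carry_add_mul_of_dvd (pow_dvd_pow q (mem_range.1 hk)) hvA hwB]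
  · simp only [map_prod, map_pow]
    refine prod_congr rfl fun j _ ↦ ?_
    rw [add_assoc, hirr.mk_carlitzBracket_add hd, pow_add, carry_mul_add_mul hA hvA hwB]

lemma Irreducible.dvd_carlitzBinom_add_mul (hirr : Irreducible ℘) (hd : ℘.natDegree ∣ d)
    (hAv : A < v) (hv : v < q ^ d) (hle : v + q ^ d * w ≤ A + q ^ d * B) :
    ℘ ∣ carlitzBinom Fq q (A + q ^ d * B) (v + q ^ d * w) := by
  have hq : 1 < q := Fintype.one_lt_card
  have hd0 : d ≠ 0 := by
    rintro rfl
    rw [pow_zero] at hv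
    omega
  rw [carlitzBinom_eq_prod_carlitzBracket hle ((Nat.lt_pow_self hq).trans_le
    (Nat.pow_le_pow_right hq.le (Nat.le_add_left _ d)))]
  refine dvd_trans ?_ (dvd_prod_of_mem _ (mem_range.2 (show d - 1 < d + _ by omega)))
  rw [Nat.sub_add_cancel (Nat.one_le_iff_ne_zero.2 hd0), carry_add_mul_eq_one hAv hv hle, pow_one]
  exact hirr.dvd_carlitzBracket hd

lemma Irreducible.mk_carlitzBinom_add_mul (hirr : Irreducible ℘) (hd : ℘.natDegree ∣ d)
    (hA : A < q ^ d) (hv : v < q ^ d) :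
    AdjoinRoot.mk ℘ (carlitzBinom Fq q (A + q ^ d * B) (v + q ^ d * w)) =
      AdjoinRoot.mk ℘ (carlitzBinom Fq q A v) * AdjoinRoot.mk ℘ (carlitzBinom Fq q B w) := by
  rcases le_or_gt v A with hvA | hAv
  · rcases le_or_gt w B with hwB | hBw
    · exact hirr.mk_carlitzBinom_add_mul_of_le hd hA hvA hwB
    · have := Nat.mul_le_mul_left (q ^ d) (Nat.succ_le_of_lt hBw)
      rw [Nat.mul_succ] at this
      rw [carlitzBinom_of_lt (n := B) hBw, carlitzBinom_of_lt (by omega), map_zero, mul_zero]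
  · rw [carlitzBinom_of_lt hAv, map_zero, zero_mul]
    rcases le_or_gt (v + q ^ d * w) (A + q ^ d * B) with hle | hlt
    · exact AdjoinRoot.mk_eq_zero.2 (hirr.dvd_carlitzBinom_add_mul hd hAv hv hle)
    · rw [carlitzBinom_of_lt hlt, map_zero]

end Carlitz

theorem carlitzBinom_concat_congr_general (Fq : Type*) [Field Fq] [Fintype Fq]
    (p s : ℕ) (hcard : Fintype.card Fq = p ^ s)
    (h : ℕ) (℘ : Polynomial Fq) (hirr : Irreducible ℘) (hdeg : ℘.natDegree = h)
    (a b : List ℕ) (ha : a ≠ []) (ha' : ∀ x ∈ a, x < (p ^ s) ^ h) (u : ℕ) :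
    ℘ ∣ (carlitzBinom Fq (p ^ s) (Nat.ofDigits ((p ^ s) ^ h) (a ++ b)) u -
      carlitzBinom Fq (p ^ s) (Nat.ofDigits ((p ^ s) ^ h) a)
          (digitTrunc ((p ^ s) ^ h) u (a.length - 1) 0) *
        carlitzBinom Fq (p ^ s) (Nat.ofDigits ((p ^ s) ^ h) b)
          (digitShift ((p ^ s) ^ h) u a.length)) := by
  subst hdeg
  rw [← hcard] at ha' ⊢
  have hQ : 1 < Fintype.card Fq ^ ℘.natDegree :=
    Nat.one_lt_pow hirr.natDegree_pos.ne' Fintype.one_lt_card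
  have hA := Nat.ofDigits_lt_base_pow_length hQ ha'
  rw [← pow_mul] at hA
  rw [← AdjoinRoot.mk_eq_mk, map_mul, Nat.ofDigits_append, digitTrunc_zero,
    Nat.sub_add_cancel (List.length_pos_iff.2 ha), digitShift_eq_div hQ, ← pow_mul]
  conv_lhs => rw [← Nat.mod_add_div u (Fintype.card Fq ^ (℘.natDegree * a.length))]
  exact hirr.mk_carlitzBinom_add_mul (dvd_mul_right _ _) hA (Nat.mod_lt _ (by positivity))

/-- Lemma 2: for a prime `℘` of degree `h ≥ 1` in `A`, words `ᾱ, β̄ ∈ S_h^ω` (nonempty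
lists of digits `< q^h`, with `z_ᾱ(h) = Nat.ofDigits (q^h) ᾱ` and `deg ᾱ = ᾱ.length`,
concatenation being list append) and `u ∈ ℤ_{≥0}`,
`binom(z_{ᾱ⋆β̄}(h), u)_C ≡ binom(z_ᾱ(h), u_{(deg ᾱ − 1, 0)})_C · binom(z_β̄(h), u_{(deg ᾱ)})_C
(mod ℘)`. -/
theorem carlitzBinom_concat_congr (Fq : Type*) [Field Fq] [Fintype Fq]
    (p s : ℕ) (hp : p.Prime) (hs : 0 < s) (hcard : Fintype.card Fq = p ^ s)
    (h : ℕ) (hh : 1 ≤ h) (℘ : Polynomial Fq) (hirr : Irreducible ℘) (hdeg : ℘.natDegree = h)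
    (a b : List ℕ) (ha : a ≠ []) (ha' : ∀ x ∈ a, x < (p ^ s) ^ h)
    (hb : b ≠ []) (hb' : ∀ x ∈ b, x < (p ^ s) ^ h) (u : ℕ) :
    ℘ ∣ (carlitzBinom Fq (p ^ s) (Nat.ofDigits ((p ^ s) ^ h) (a ++ b)) u -
      carlitzBinom Fq (p ^ s) (Nat.ofDigits ((p ^ s) ^ h) a)
          (digitTrunc ((p ^ s) ^ h) u (a.length - 1) 0) *
        carlitzBinom Fq (p ^ s) (Nat.ofDigits ((p ^ s) ^ h) b)
          (digitShift ((p ^ s) ^ h) u a.length)) :=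
  carlitzBinom_concat_congr_general Fq p s hcard h ℘ hirr hdeg a b ha ha' u
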